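/- If S is a simplex all of whose edge lengths lie in [2, 2.51], then the dihedral angle of S along any edge is at most arccos(−29003/96999) ≈ 1.874444. -/

import Mathlib

noncomputable section

/-- The dihedral angle of the simplex (v0,v1,v2,v3) along the edge v0v1. -/
def dihedralAngle (v0 v1 v2 v3 : EuclideanSpace ℝ (Fin 3)) : ℝ :=
  InnerProductGeometry.angle
    ((v2 - v0) - (((inner ℝ (v2 - v0) (v1 - v0) : ℝ)) / ‖v1 - v0‖^2) • (v1 - v0))
    ((v3 - v0) - (((inner ℝ (v3 - v0) (v1 - v0) : ℝ)) / ‖v1 - v0‖^2) • (v1 - v0))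

/-!
Write `a, b, c` for the squared lengths of the edges `v₀v₁, v₀v₂, v₀v₃` and `d, e, f` for those
of `v₁v₂, v₁v₃, v₂v₃`. By polarization the cosine of the dihedral angle along `v₀v₁` is
`N / √(G₂ G₃)`, where `N = 2a(b + c - f) - (a + b - d)(a + c - e)` and
`G₂ = 4ab - (a + b - d)²`, `G₃ = 4ac - (a + c - e)²` are sixteen times the squared areas of the
two faces through `v₀v₁`. Expanding, `-N ≤ 2af - (G₂ + G₃)/2`. A face with sides at least `2` is
at least as large as the isosceles triangle with legs `2` on the same base, so `G ≥ a(16 - a)`.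
For `a, f ≤ F := 2.51²` and `1 + k = 2F/(16 - F)` this gives `2af ≤ (1 + k) √(G₂ G₃)`, hence
`-N ≤ k √(G₂ G₃) - (√G₂ - √G₃)²/2`. Here `k = (3F - 16)/(16 - F) = 29003/96999`, attained at
`a = f = F` and `b = c = d = e = 4`.
-/

open Real InnerProductGeometry Set
open scoped RealInnerProductSpace

def faceGram (a b d : ℝ) : ℝ := 4 * a * b - (a + b - d) ^ 2

def dihedralNumerator (a b c d e f : ℝ) : ℝ := 2 * a * (b + c - f) - (a + b - d) * (a + c - e)

lemma dihedralNumerator_self (a b d : ℝ) : dihedralNumerator a b b d d 0 = faceGram a b d := by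
  unfold dihedralNumerator faceGram
  ring

lemma neg_dihedralNumerator (a b c d e f : ℝ) :
    -dihedralNumerator a b c d e f
      = 2 * a * f - (faceGram a b d + faceGram a c e) / 2 - ((a + b - d) - (a + c - e)) ^ 2 / 2 := by
  unfold dihedralNumerator faceGram
  ring

section InnerProductSpace

variable {V : Type*} [NormedAddCommGroup V] [InnerProductSpace ℝ V]

def perpComponent (u x : V) : V := x - (⟪x, u⟫ / ‖u‖ ^ 2) • u

lemma norm_sq_mul_inner_perpComponent (u x y : V) (hu : u ≠ 0) :
    ‖u‖ ^ 2 * ⟪perpComponent u x, perpComponent u y⟫ = ‖u‖ ^ 2 * ⟪x, y⟫ - ⟪x, u⟫ * ⟪y, u⟫ := by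
  have : ‖u‖ ^ 2 ≠ 0 := by positivity
  simp only [perpComponent, inner_sub_left, inner_sub_right, real_inner_smul_left,
    real_inner_smul_right, real_inner_self_eq_norm_sq, real_inner_comm u]
  field_simp
  ring

lemma four_mul_norm_sq_mul_inner_perpComponent (u x y : V) (hu : u ≠ 0) :
    4 * ‖u‖ ^ 2 * ⟪perpComponent u x, perpComponent u y⟫
      = dihedralNumerator (‖u‖ ^ 2) (‖x‖ ^ 2) (‖y‖ ^ 2) (‖x - u‖ ^ 2) (‖y - u‖ ^ 2)
          (‖x - y‖ ^ 2) := by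
  rw [mul_assoc, norm_sq_mul_inner_perpComponent u x y hu, norm_sub_sq_real x u,
    norm_sub_sq_real y u, norm_sub_sq_real x y, dihedralNumerator]
  ring

lemma four_mul_dist_sq_mul_inner_perpComponent (v₀ v₁ v₂ v₃ : V) (h₀₁ : v₀ ≠ v₁) :
    4 * dist v₀ v₁ ^ 2 * ⟪perpComponent (v₁ - v₀) (v₂ - v₀), perpComponent (v₁ - v₀) (v₃ - v₀)⟫
      = dihedralNumerator (dist v₀ v₁ ^ 2) (dist v₀ v₂ ^ 2) (dist v₀ v₃ ^ 2) (dist v₁ v₂ ^ 2)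
          (dist v₁ v₃ ^ 2) (dist v₂ v₃ ^ 2) := by
  rw [dist_comm v₂ v₃]
  simp only [dist_eq_norm']
  rw [four_mul_norm_sq_mul_inner_perpComponent _ _ _ (sub_ne_zero.2 h₀₁.symm)]
  simp only [sub_sub_sub_cancel_right]

lemma two_mul_dist_mul_norm_perpComponent_sq (v₀ v₁ v₂ : V) (h₀₁ : v₀ ≠ v₁) :
    (2 * dist v₀ v₁ * ‖perpComponent (v₁ - v₀) (v₂ - v₀)‖) ^ 2
      = faceGram (dist v₀ v₁ ^ 2) (dist v₀ v₂ ^ 2) (dist v₁ v₂ ^ 2) := by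
  calc (2 * dist v₀ v₁ * ‖perpComponent (v₁ - v₀) (v₂ - v₀)‖) ^ 2
      = 4 * dist v₀ v₁ ^ 2
          * ⟪perpComponent (v₁ - v₀) (v₂ - v₀), perpComponent (v₁ - v₀) (v₂ - v₀)⟫ := by
        rw [real_inner_self_eq_norm_sq]
        ring
    _ = _ := four_mul_dist_sq_mul_inner_perpComponent v₀ v₁ v₂ v₂ h₀₁
    _ = _ := by rw [dist_self, zero_pow two_ne_zero, dihedralNumerator_self]

lemma angle_le_arccos_neg {x y : V} {k : ℝ} (hk : 0 ≤ k) (h : -k * (‖x‖ * ‖y‖) ≤ ⟪x, y⟫) :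
    angle x y ≤ arccos (-k) := by
  refine arccos_le_arccos ?_
  rcases (by positivity : 0 ≤ ‖x‖ * ‖y‖).eq_or_lt with h0 | hpos
  · rw [← h0, div_zero]
    linarith
  · rwa [le_div_iff₀ hpos]

end InnerProductSpace

lemma mul_sixteen_sub_le_faceGram {a b d : ℝ} (hb : 4 ≤ b) (hba : b ≤ 2 * a + 4) (hd : 4 ≤ d)
    (hdab : d + 4 ≤ 2 * (a + b)) : a * (16 - a) ≤ faceGram a b d := by
  have : faceGram a b d
      = a * (16 - a) + (b - 4) * (2 * a + 4 - b) + (d - 4) * (2 * (a + b) - d - 4) := by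
    unfold faceGram
    ring
  rw [this]
  nlinarith [mul_nonneg (sub_nonneg.2 hb) (sub_nonneg.2 hba),
    mul_nonneg (sub_nonneg.2 hd) (sub_nonneg.2 hdab)]

lemma neg_mul_sqrt_mul_sqrt_le_dihedralNumerator {a b c d e f F k : ℝ} (ha : 0 ≤ a) (hF : 0 ≤ F)
    (hf : f ≤ F) (hk : 0 ≤ k) (h₂ : 2 * a * F ≤ (1 + k) * faceGram a b d)
    (h₃ : 2 * a * F ≤ (1 + k) * faceGram a c e) :
    -k * (√(faceGram a b d) * √(faceGram a c e)) ≤ dihedralNumerator a b c d e f := by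
  have haF : 0 ≤ 2 * a * F := by positivity
  have hG₂ : 0 ≤ faceGram a b d := nonneg_of_mul_nonneg_right (haF.trans h₂) (by linarith)
  have hG₃ : 0 ≤ faceGram a c e := nonneg_of_mul_nonneg_right (haF.trans h₃) (by linarith)
  set p := √(faceGram a b d)
  set q := √(faceGram a c e)
  have hp : p ^ 2 = faceGram a b d := sq_sqrt hG₂
  have hq : q ^ 2 = faceGram a c e := sq_sqrt hG₃
  have hpq : 2 * a * F ≤ (1 + k) * (p * q) := by
    refine le_of_pow_le_pow_left₀ two_ne_zero (by positivity) ?_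
    calc (2 * a * F) ^ 2 = (2 * a * F) * (2 * a * F) := sq _
      _ ≤ ((1 + k) * p ^ 2) * ((1 + k) * q ^ 2) := by
        rw [hp, hq]
        exact mul_le_mul h₂ h₃ haF (haF.trans h₂)
      _ = ((1 + k) * (p * q)) ^ 2 := by ring
  nlinarith [neg_dihedralNumerator a b c d e f, mul_nonneg ha (sub_nonneg.2 hf), sq_nonneg (p - q),
    sq_nonneg ((a + b - d) - (a + c - e))]

lemma two_mul_mul_le_faceGram {a b d : ℝ} (ha : a ∈ Icc 4 6.3001) (hb : b ∈ Icc 4 6.3001)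
    (hd : d ∈ Icc 4 6.3001) : 2 * a * 6.3001 ≤ (1 + 29003 / 96999) * faceGram a b d := by
  have := mul_sixteen_sub_le_faceGram (a := a) hb.1 (by linarith [hb.2, ha.1]) hd.1
    (by linarith [hd.2, ha.1, hb.1])
  nlinarith [mul_nonneg (by linarith [ha.1] : (0 : ℝ) ≤ a) (sub_nonneg.2 ha.2)]

lemma dihedralAngle_eq_angle_perpComponent (v₀ v₁ v₂ v₃ : EuclideanSpace ℝ (Fin 3)) :
    dihedralAngle v₀ v₁ v₂ v₃
      = angle (perpComponent (v₁ - v₀) (v₂ - v₀)) (perpComponent (v₁ - v₀) (v₃ - v₀)) :=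
  rfl

theorem dihedralAngle_le_arccos_neg {v₀ v₁ v₂ v₃ : EuclideanSpace ℝ (Fin 3)}
    {k a b c d e f : ℝ} (hk : 0 ≤ k) (h₀₁ : v₀ ≠ v₁)
    (ha : dist v₀ v₁ ^ 2 = a) (hb : dist v₀ v₂ ^ 2 = b) (hc : dist v₀ v₃ ^ 2 = c)
    (hd : dist v₁ v₂ ^ 2 = d) (he : dist v₁ v₃ ^ 2 = e) (hf : dist v₂ v₃ ^ 2 = f)
    (h : -k * (√(faceGram a b d) * √(faceGram a c e)) ≤ dihedralNumerator a b c d e f) :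
    dihedralAngle v₀ v₁ v₂ v₃ ≤ arccos (-k) := by
  subst ha hb hc hd he hf
  rw [← four_mul_dist_sq_mul_inner_perpComponent _ _ _ _ h₀₁,
    ← two_mul_dist_mul_norm_perpComponent_sq _ _ _ h₀₁,
    ← two_mul_dist_mul_norm_perpComponent_sq _ _ v₃ h₀₁, sqrt_sq (by positivity),
    sqrt_sq (by positivity)] at h
  have hpos : 0 < 4 * dist v₀ v₁ ^ 2 := by have := dist_pos.2 h₀₁; positivity
  rw [dihedralAngle_eq_angle_perpComponent]
  refine angle_le_arccos_neg hk (le_of_mul_le_mul_left ?_ hpos)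
  exact le_of_eq_of_le (by ring) h

/-- If all six edge lengths of a simplex lie in [2, 2.51] (a quasi-regular
tetrahedron), then the dihedral angle along any edge is at most
arccos(−29003/96999). Since the hypothesis is symmetric in the four vertices,
the stated conclusion for the edge p0p1 covers every edge. -/
theorem dihedral_le_dihmax
    (p : Fin 4 → EuclideanSpace ℝ (Fin 3))
    (h : ∀ i j, i ≠ j → dist (p i) (p j) ∈ Set.Icc (2:ℝ) 2.51) :
    dihedralAngle (p 0) (p 1) (p 2) (p 3) ≤ Real.arccos (-(29003/96999)) := by
  have hsq (i j : Fin 4) (hij : i ≠ j) : dist (p i) (p j) ^ 2 ∈ Icc (4 : ℝ) 6.3001 := by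
    obtain ⟨h₁, h₂⟩ := h i j hij
    constructor <;> nlinarith
  have h₀₁ := hsq 0 1 (by decide)
  have h₀₂ := hsq 0 2 (by decide)
  have h₀₃ := hsq 0 3 (by decide)
  have h₁₂ := hsq 1 2 (by decide)
  have h₁₃ := hsq 1 3 (by decide)
  have h₂₃ := hsq 2 3 (by decide)
  have hp₀₁ : p 0 ≠ p 1 := dist_pos.1 (by linarith [(h 0 1 (by decide)).1])
  exact dihedralAngle_le_arccos_neg (by norm_num) hp₀₁ rfl rfl rfl rfl rfl rfl
    (neg_mul_sqrt_mul_sqrt_le_dihedralNumerator (by linarith [h₀₁.1]) (by norm_num) h₂₃.2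
      (by norm_num) (two_mul_mul_le_faceGram h₀₁ h₀₂ h₁₂) (two_mul_mul_le_faceGram h₀₁ h₀₃ h₁₃))
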